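/- arXiv:2007.07115 — 3 statements merged into one kernel-verified Lean document; each statement's English description precedes it below -/
import Mathlib

section
/- There exists a universal constant C > 0 with the following property. Let S : ℝⁿ → ℝ be measurable with Z := ∫_{ℝⁿ} exp(−S(φ)) dφ finite and positive, let p(φ) := exp(−S(φ))/Z, let q : ℝⁿ → ℝ be a strictly positive probability density with respect to Lebesgue measure, and set w(φ) := p(φ)/q(φ) and C(φ) := S(φ) + ln q(φ). If |w(φ) − 1| ≤ 1/2 for q-almost every φ, then |KL(q‖p) − (1/2)Var_q(C)| ≤ C·E_q[|w − 1|³], where KL(q‖p) = ∫ q(φ) ln(q(φ)/p(φ)) dφ and Var_q(C) is the variance of C(φ) for φ ∼ q. In other words, KL(q‖p) = (1/2)Var_q(C) + O(E_q[|w − 1|³]). -/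
/-!
Under `q`, the Kullback–Leibler divergence is `-E[log w]`, and `C = -log w - log Z`, so
`Var C = Var (log w)`. Since `E[w] = 1`, with `t = w - 1` one has
`-E[log w] - ½ Var (log w) = -E[log w - t + t²/2] - ½ E[log² w - t²] + ½ (E[log w - t])²`,
and on `|t| ≤ 1/2` the Taylor expansion of `log` at `1` bounds the three terms by
`2 E|t|³`, `3 E|t|³` and (after Jensen) `E|t|³`.
-/

open MeasureTheory ProbabilityTheory Real
open scoped ENNReal

namespace Real

variable {x : ℝ}

theorem abs_log_sub_add_sq_div_two_le (hx : |x - 1| ≤ 1 / 2) :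
    |log x - (x - 1) + (x - 1) ^ 2 / 2| ≤ 2 * |x - 1| ^ 3 := by
  have hy : |1 - x| < 1 := by rw [abs_sub_comm]; linarith
  have h := abs_log_sub_add_sum_range_le hy 2
  have hsum :
      ∑ i ∈ Finset.range 2, (1 - x) ^ (i + 1) / (i + 1) = -(x - 1) + (x - 1) ^ 2 / 2 := by
    norm_num [Finset.sum_range_succ]; ring
  rw [hsum, sub_sub_cancel, abs_sub_comm 1 x] at h
  calc |log x - (x - 1) + (x - 1) ^ 2 / 2|
      = |-(x - 1) + (x - 1) ^ 2 / 2 + log x| := by congr 1; ring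
    _ ≤ |x - 1| ^ 3 / (1 - |x - 1|) := h
    _ ≤ 2 * |x - 1| ^ 3 := by
      rw [div_le_iff₀ (by linarith)]
      have hgap : 0 ≤ 1 - 2 * |x - 1| := by linarith
      nlinarith [mul_nonneg (pow_nonneg (abs_nonneg (x - 1)) 3) hgap]

theorem abs_log_sub_sub_one_le (hx : |x - 1| ≤ 1 / 2) :
    |log x - (x - 1)| ≤ 2 * (x - 1) ^ 2 := by
  have h := abs_log_sub_add_sq_div_two_le hx
  have hcube : 2 * |x - 1| ^ 3 ≤ (x - 1) ^ 2 := by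
    rw [← sq_abs (x - 1)]; nlinarith [sq_nonneg |x - 1|]
  calc |log x - (x - 1)| = |(log x - (x - 1) + (x - 1) ^ 2 / 2) - (x - 1) ^ 2 / 2| := by
        congr 1; ring
    _ ≤ |log x - (x - 1) + (x - 1) ^ 2 / 2| + |(x - 1) ^ 2 / 2| := abs_sub _ _
    _ ≤ 2 * (x - 1) ^ 2 := by
        rw [abs_of_nonneg (by positivity : (0 : ℝ) ≤ (x - 1) ^ 2 / 2)]
        linarith [sq_nonneg (x - 1)]

theorem abs_log_le_one_of_abs_sub_one_le (hx : |x - 1| ≤ 1 / 2) : |log x| ≤ 1 := by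
  have h := abs_log_sub_sub_one_le hx
  have := abs_sub_abs_le_abs_sub (log x) (x - 1)
  nlinarith [sq_abs (x - 1), abs_nonneg (x - 1)]

theorem sq_log_sub_sub_one_le (hx : |x - 1| ≤ 1 / 2) :
    (log x - (x - 1)) ^ 2 ≤ 2 * |x - 1| ^ 3 := by
  have h := pow_le_pow_left₀ (abs_nonneg _) (abs_log_sub_sub_one_le hx) 2
  rw [sq_abs, ← sq_abs (x - 1)] at h
  nlinarith [mul_le_mul_of_nonneg_left hx (pow_nonneg (abs_nonneg (x - 1)) 3)]

theorem abs_sq_log_sub_sq_sub_one_le (hx : |x - 1| ≤ 1 / 2) :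
    |log x ^ 2 - (x - 1) ^ 2| ≤ 6 * |x - 1| ^ 3 := by
  have h := abs_log_sub_sub_one_le hx
  have hsum : |log x + (x - 1)| ≤ 3 * |x - 1| := by
    calc |log x + (x - 1)| = |(log x - (x - 1)) + 2 * (x - 1)| := by congr 1; ring
      _ ≤ |log x - (x - 1)| + 2 * |x - 1| := by
          simpa [abs_mul] using abs_add_le (log x - (x - 1)) (2 * (x - 1))
      _ ≤ 3 * |x - 1| := by rw [← sq_abs] at h; nlinarith [abs_nonneg (x - 1)]
  calc |log x ^ 2 - (x - 1) ^ 2| = |log x - (x - 1)| * |log x + (x - 1)| := by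
        rw [← abs_mul]; congr 1; ring
    _ ≤ 2 * (x - 1) ^ 2 * (3 * |x - 1|) := mul_le_mul h hsum (abs_nonneg _) (by positivity)
    _ = 6 * |x - 1| ^ 3 := by rw [← sq_abs (x - 1)]; ring

end Real

section WithDensity

variable {α E : Type*} [MeasurableSpace α] [NormedAddCommGroup E] [NormedSpace ℝ E]
  {ν : Measure α} {f : α → ℝ}

theorem integral_withDensity_ofReal (hf : Measurable f) (hf0 : 0 ≤ f) (g : α → E) :
    ∫ x, g x ∂ν.withDensity (fun x ↦ ENNReal.ofReal (f x)) = ∫ x, f x • g x ∂ν := by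
  rw [integral_withDensity_eq_integral_toReal_smul (by fun_prop) (by simp)]
  simp_rw [ENNReal.toReal_ofReal (hf0 _)]

theorem isProbabilityMeasure_withDensity_ofReal (hf0 : 0 ≤ f) (hf1 : ∫ x, f x ∂ν = 1) :
    IsProbabilityMeasure (ν.withDensity fun x ↦ ENNReal.ofReal (f x)) := by
  have hf : Integrable f ν := .of_integral_ne_zero (by simp [hf1])
  constructor
  rw [withDensity_apply _ MeasurableSet.univ, setLIntegral_univ,
    ← ofReal_integral_eq_lintegral_ofReal hf (.of_forall hf0), hf1, ENNReal.ofReal_one]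

end WithDensity

section Probability

variable {Ω : Type*} [MeasurableSpace Ω] {μ : Measure Ω} [IsProbabilityMeasure μ]

theorem sq_integral_le_integral_sq {f : Ω → ℝ} (hf : MemLp f 2 μ) :
    (∫ x, f x ∂μ) ^ 2 ≤ ∫ x, f x ^ 2 ∂μ := by
  have h := variance_nonneg f μ
  rw [variance_eq_sub hf] at h
  simpa using h

theorem neg_integral_sub_half_variance_eq {L t : Ω → ℝ} (hL : MemLp L 2 μ) (ht : MemLp t 2 μ)
    (htmean : ∫ x, t x ∂μ = 0) :
    -(∫ x, L x ∂μ) - 1 / 2 * Var[L; μ] =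
      -(∫ x, (L x - t x + t x ^ 2 / 2) ∂μ) - 1 / 2 * ∫ x, (L x ^ 2 - t x ^ 2) ∂μ
        + 1 / 2 * (∫ x, (L x - t x) ∂μ) ^ 2 := by
  have hL1 : Integrable L μ := hL.integrable one_le_two
  have ht1 : Integrable t μ := ht.integrable one_le_two
  have hdiff : Integrable (fun x ↦ L x - t x) μ := hL1.sub ht1
  have ht2 : Integrable (fun x ↦ t x ^ 2 / 2) μ := ht.integrable_sq.div_const 2
  rw [variance_eq_sub hL, integral_add hdiff ht2,
    integral_sub hL.integrable_sq ht.integrable_sq, integral_sub hL1 ht1, integral_div, htmean]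
  simp only [Pi.pow_apply]
  ring

variable {w : Ω → ℝ}

theorem memLp_log_of_abs_sub_one_le (hw : AEMeasurable w μ)
    (hbound : ∀ᵐ x ∂μ, |w x - 1| ≤ 1 / 2) (p : ℝ≥0∞) :
    MemLp (fun x ↦ log (w x)) p μ :=
  .of_bound (measurable_log.comp_aemeasurable hw).aestronglyMeasurable 1 (by
    filter_upwards [hbound] with x hx using abs_log_le_one_of_abs_sub_one_le hx)

theorem abs_neg_integral_log_sub_half_variance_le (hw : AEMeasurable w μ)
    (hbound : ∀ᵐ x ∂μ, |w x - 1| ≤ 1 / 2) (hmean : ∫ x, w x ∂μ = 1) :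
    |-(∫ x, log (w x) ∂μ) - 1 / 2 * Var[fun x ↦ log (w x); μ]|
      ≤ 6 * ∫ x, |w x - 1| ^ 3 ∂μ := by
  set L : Ω → ℝ := fun x ↦ log (w x)
  set t : Ω → ℝ := fun x ↦ w x - 1
  set T := ∫ x, |t x| ^ 3 ∂μ
  have hL : MemLp L 2 μ := memLp_log_of_abs_sub_one_le hw hbound 2
  have ht : MemLp t 2 μ := .of_bound (by fun_prop) (1 / 2) hbound
  have hT : Integrable (fun x ↦ |t x| ^ 3) μ := .of_bound (by fun_prop) (1 / 8) (by
    filter_upwards [hbound] with x hx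
    rw [norm_of_nonneg (by positivity)]
    linarith [pow_le_pow_left₀ (abs_nonneg (t x)) hx 3])
  have htmean : ∫ x, t x ∂μ = 0 := by
    rw [integral_sub (.of_integral_ne_zero (by simp [hmean])) (integrable_const 1), hmean]
    simp
  have hcubic : |∫ x, (L x - t x + t x ^ 2 / 2) ∂μ| ≤ 2 * T := by
    rw [← integral_const_mul]
    refine norm_integral_le_of_norm_le (f := fun x ↦ L x - t x + t x ^ 2 / 2) (hT.const_mul 2) ?_
    filter_upwards [hbound] with x hx using abs_log_sub_add_sq_div_two_le hx
  have hsq : |∫ x, (L x ^ 2 - t x ^ 2) ∂μ| ≤ 6 * T := by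
    rw [← integral_const_mul]
    refine norm_integral_le_of_norm_le (f := fun x ↦ L x ^ 2 - t x ^ 2) (hT.const_mul 6) ?_
    filter_upwards [hbound] with x hx using abs_sq_log_sub_sq_sub_one_le hx
  have hlin : (∫ x, (L x - t x) ∂μ) ^ 2 ≤ 2 * T := by
    rw [← integral_const_mul]
    refine (sq_integral_le_integral_sq (hL.sub ht)).trans
      (integral_mono_ae (hL.sub ht).integrable_sq (hT.const_mul 2) ?_)
    filter_upwards [hbound] with x hx using sq_log_sub_sub_one_le hx
  rw [neg_integral_sub_half_variance_eq hL ht htmean, abs_le]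
  constructor <;> nlinarith [abs_le.mp hcubic, abs_le.mp hsq, sq_nonneg (∫ x, (L x - t x) ∂μ)]

end Probability

/-- There is a universal constant `c > 0` such that, whenever the normalized importance
weight `w = p/q` satisfies `|w - 1| ≤ 1/2` q-almost everywhere,
`|KL(q‖p) - (1/2) Var_q(C)| ≤ c · E_q[|w-1|³]`, where `C = S + ln q`. -/
theorem kl_eq_half_variance_of_C_up_to_third_moment :
    ∃ c : ℝ, 0 < c ∧
      ∀ (n : ℕ) (S : (Fin n → ℝ) → ℝ), Measurable S →
      ∀ (Z : ℝ), Z = ∫ φ : Fin n → ℝ, Real.exp (-S φ) →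
      Integrable (fun φ : Fin n → ℝ => Real.exp (-S φ)) →
      0 < Z →
      ∀ (p : (Fin n → ℝ) → ℝ), (∀ φ, p φ = Real.exp (-S φ) / Z) →
      ∀ (q : (Fin n → ℝ) → ℝ), Measurable q → (∀ φ, 0 < q φ) →
      (∫ φ : Fin n → ℝ, q φ) = 1 →
      ∀ (w : (Fin n → ℝ) → ℝ), (∀ φ, w φ = p φ / q φ) →
      ∀ (Cf : (Fin n → ℝ) → ℝ), (∀ φ, Cf φ = S φ + Real.log (q φ)) →
      (∀ᵐ φ ∂((volume : Measure (Fin n → ℝ)).withDensity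
          (fun φ => ENNReal.ofReal (q φ))), |w φ - 1| ≤ 1/2) →
      |(∫ φ : Fin n → ℝ, q φ * Real.log (q φ / p φ))
          - (1/2) * ((∫ φ : Fin n → ℝ, q φ * (Cf φ)^2)
              - (∫ φ : Fin n → ℝ, q φ * Cf φ)^2)|
        ≤ c * ∫ φ : Fin n → ℝ, q φ * |w φ - 1|^3 := by
  refine ⟨6, by norm_num, ?_⟩
  intro n S hS Z hZ _ hZpos p hp q hq hq0 hq1 w hw Cf hCf hbound
  set μ := (volume : Measure (Fin n → ℝ)).withDensity fun φ ↦ ENNReal.ofReal (q φ)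
  have : IsProbabilityMeasure μ :=
    isProbabilityMeasure_withDensity_ofReal (fun φ ↦ (hq0 φ).le) hq1
  have hμ (g : (Fin n → ℝ) → ℝ) : ∫ φ, q φ * g φ = ∫ φ, g φ ∂μ :=
    (integral_withDensity_ofReal hq (fun φ ↦ (hq0 φ).le) g).symm
  have hp0 (φ) : 0 < p φ := by rw [hp]; positivity
  have hwm : Measurable w := by
    rw [funext hw, funext hp]; fun_prop
  have hmean : ∫ φ, w φ ∂μ = 1 := by
    rw [← hμ]
    simp_rw [hw, hp, mul_div_cancel₀ _ (hq0 _).ne']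
    rw [integral_div, ← hZ, div_self hZpos.ne']
  have hKL (φ) : log (q φ / p φ) = -log (w φ) := by
    rw [hw, log_div (hp0 φ).ne' (hq0 φ).ne', log_div (hq0 φ).ne' (hp0 φ).ne', neg_sub]
  have hC : Cf = fun φ ↦ -log (w φ) - log Z := by
    ext φ
    rw [hCf, hw, log_div (hp0 φ).ne' (hq0 φ).ne', hp, log_div (exp_pos _).ne' hZpos.ne', log_exp]
    ring
  have hCmem : MemLp Cf 2 μ := by
    rw [hC]
    exact (memLp_log_of_abs_sub_one_le hwm.aemeasurable hbound 2).neg.sub (memLp_const _)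
  have hvar : Var[Cf; μ] = Var[fun φ ↦ log (w φ); μ] := by
    have hlog : Measurable fun φ ↦ log (w φ) := measurable_log.comp hwm
    rw [hC, variance_sub_const (X := fun φ ↦ -log (w φ)) hlog.neg.aestronglyMeasurable,
      variance_fun_neg]
  rw [variance_eq_sub hCmem] at hvar
  simp only [Pi.pow_apply] at hvar
  simp only [hμ, hKL, integral_neg, hvar]
  exact abs_neg_integral_log_sub_half_variance_le hwm.aemeasurable hbound hmean
end

section
/- For all real numbers a > 0 and b > 0, the Gaussian–quartic integral ∫_{−∞}^{∞} exp(−a x⁴ − b x²) dx equals √(b/(4a)) · exp(b²/(8a)) · ∫_{0}^{∞} exp(−(b²/(8a))·cosh t)·cosh(t/4) dt, i.e., it equals √(b/(4a)) · exp(b²/(8a)) · K_{1/4}(b²/(8a)), where K_{1/4} is the modified Bessel function of the second kind of order 1/4, expressed through its integral representation K_ν(z) = ∫_0^∞ e^{−z cosh t} cosh(νt) dt. -/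
open MeasureTheory Set Real

/-!
Substituting `x = 2 √(b/(4a)) sinh (t/4)` on the half-line turns the exponent into
`b²/(8a) (1 - cosh t)`, because `sinh⁴ u + sinh² u = (cosh 4u - 1)/8`, while the Jacobian
supplies the factor `cosh (t/4)`. The integrand is even, so the whole line contributes twice the
half-line.
-/

theorem Real.sinh_pow_four_add_sinh_sq (x : ℝ) :
    sinh x ^ 4 + sinh x ^ 2 = (cosh (4 * x) - 1) / 8 := by
  rw [show 4 * x = 2 * (2 * x) by ring, cosh_two_mul, sinh_sq (2 * x), cosh_two_mul, cosh_sq]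
  ring

theorem quartic_const_mul_sinh {a b k : ℝ} (ha : a ≠ 0) (hk : a * k ^ 2 = b) (x : ℝ) :
    a * (k * sinh x) ^ 4 + b * (k * sinh x) ^ 2 = b ^ 2 / (8 * a) * (cosh (4 * x) - 1) := by
  subst hk
  rw [show a * (k * sinh x) ^ 4 + a * k ^ 2 * (k * sinh x) ^ 2
      = a * k ^ 4 * (sinh x ^ 4 + sinh x ^ 2) by ring, sinh_pow_four_add_sinh_sq]
  field_simp

theorem integral_Ioi_eq_integral_Ioi_comp_const_mul_sinh_div {E : Type*} [NormedAddCommGroup E]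
    [NormedSpace ℝ E] (f : ℝ → E) {k c : ℝ} (hk : 0 < k) (hc : 0 < c) :
    ∫ x in Ioi 0, f x = ∫ t in Ioi 0, (k / c * cosh (t / c)) • f (k * sinh (t / c)) := by
  set e : ℝ ≃o ℝ :=
    ((OrderIso.divRight₀ c hc).trans sinhOrderIso).trans (OrderIso.mulLeft₀ k hk)
  have he : ⇑e = fun t => k * sinh (t / c) := rfl
  have he_image : e '' Ioi 0 = Ioi 0 := by
    rw [e.image_Ioi, he]
    simp
  have he_deriv : ∀ t, HasDerivAt e (k / c * cosh (t / c)) t := by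
    intro t
    rw [he]
    exact ((((hasDerivAt_id' t).div_const c).sinh).const_mul k).congr_deriv (by ring)
  calc ∫ x in Ioi 0, f x = ∫ x in e '' Ioi 0, f x := by rw [he_image]
    _ = ∫ t in Ioi 0, |k / c * cosh (t / c)| • f (e t) :=
        integral_image_eq_integral_abs_deriv_smul measurableSet_Ioi
          (fun t _ => (he_deriv t).hasDerivWithinAt) e.injective.injOn f
    _ = _ := by
        congr 1 with t
        rw [abs_of_pos (by positivity), he]

/-- Gaussian–quartic integral in terms of the modified Bessel function of the second kind
of order 1/4 (via its integral representation `K_ν(z) = ∫_0^∞ e^{-z cosh t} cosh(νt) dt`):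
`∫ exp(-a x⁴ - b x²) dx = √(b/(4a)) · exp(b²/(8a)) · K_{1/4}(b²/(8a))`. -/
theorem integral_exp_neg_quartic_eq_bessel
    (a b : ℝ) (ha : 0 < a) (hb : 0 < b) :
    ∫ x : ℝ, Real.exp (-a * x^4 - b * x^2)
      = Real.sqrt (b / (4 * a)) * Real.exp (b^2 / (8 * a)) *
        ∫ t in Set.Ioi (0 : ℝ),
          Real.exp (-(b^2 / (8 * a)) * Real.cosh t) * Real.cosh (t / 4) := by
  set z := b ^ 2 / (8 * a)
  set s := √(b / (4 * a))
  have hs : 0 < s := sqrt_pos.mpr (by positivity)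
  have hs_sq : a * (2 * s) ^ 2 = b := by
    rw [mul_pow, sq_sqrt (by positivity)]
    field_simp
    norm_num
  have heven : ∫ x, exp (-a * x ^ 4 - b * x ^ 2)
      = 2 * ∫ x in Ioi 0, exp (-a * x ^ 4 - b * x ^ 2) := by
    rw [← integral_comp_abs (f := fun x => exp (-a * x ^ 4 - b * x ^ 2))]
    simp_rw [sq_abs, (by decide : Even 4).pow_abs]
  have hintegrand : ∀ t, (2 * s / 4 * cosh (t / 4)) •
      exp (-a * (2 * s * sinh (t / 4)) ^ 4 - b * (2 * s * sinh (t / 4)) ^ 2)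
      = s / 2 * exp z * (exp (-z * cosh t) * cosh (t / 4)) := by
    intro t
    have hquartic := quartic_const_mul_sinh ha.ne' hs_sq (t / 4)
    rw [show 4 * (t / 4) = t by ring] at hquartic
    rw [show -a * (2 * s * sinh (t / 4)) ^ 4 - b * (2 * s * sinh (t / 4)) ^ 2
        = z + -z * cosh t by linear_combination -hquartic, exp_add, smul_eq_mul]
    ring
  rw [heven, integral_Ioi_eq_integral_Ioi_comp_const_mul_sinh_div _ (mul_pos two_pos hs) four_pos]
  simp_rw [hintegrand]
  rw [integral_const_mul]
  ring
end

section
/- (Delta method of moments.) Let (X_i)_{i≥1} be i.i.d. real-valued random variables with mean μ := E[X₁], variance σ² := Var(X₁), and finite fourth moment E[X₁⁴] < ∞, and let X̄_N := (1/N)∑_{i=1}^N X_i. Let h : ℝ → ℝ be four times continuously differentiable with its derivatives of orders 1 through 4 uniformly bounded on ℝ. Then there exists a constant C > 0 (depending only on h and on the first four moments of X₁) such that for all N ≥ 1, |E[h(X̄_N)] − h(μ) − h''(μ)σ²/(2N)| ≤ C/N²; i.e., E[h(X̄_N)] = h(μ) + h''(μ)σ²/(2N) + O(1/N²). -/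
/-!
Write `X̄_N = μ + T` with `T = S_N / N` and `S_N = ∑_{i<N} (X_i - μ)`. Taylor's theorem to third
order, with Lagrange remainder at most `sup |h⁗| · T⁴ / 24`, reduces the claim to the first four
moments of `S_N`. Expanding `S_{N+1}^k = (S_N + (X_N - μ))^k` binomially and using independence,
induction on `N` gives `E S_N = 0`, `E S_N² = N σ²`, `E S_N³ = N m₃` and
`E S_N⁴ = N m₄ + 3N(N-1)σ⁴`, where `m_k = E (X_0 - μ)^k`. After dividing by `N^k` the linear
term vanishes, the quadratic one is `h''(μ) σ² / (2N)`, and the cubic term and the remainder are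
`O(1/N²)`.
-/

open MeasureTheory ProbabilityTheory Finset Nat

theorem abs_sub_taylor_le {f : ℝ → ℝ} {n : ℕ} (hf : ContDiff ℝ (n + 1) f) {M : ℝ}
    (hM : ∀ y, |iteratedDeriv (n + 1) f y| ≤ M) (x t : ℝ) :
    |f (x + t) - ∑ k ∈ range (n + 1), iteratedDeriv k f x * t ^ k / k !|
      ≤ M * |t| ^ (n + 1) / (n + 1)! := by
  rcases eq_or_ne t 0 with rfl | ht
  · simp [sum_range_succ', zero_pow]
  obtain ⟨y, -, hy⟩ := taylor_mean_remainder_lagrange_iteratedDeriv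
    (show x ≠ x + t by simpa using ht) hf.contDiffOn
  have hcoeff : ∀ k ∈ range (n + 1),
      iteratedDerivWithin k f (Set.uIcc x (x + t)) x = iteratedDeriv k f x := fun k hk =>
    iteratedDerivWithin_eq_iteratedDeriv (uniqueDiffOn_uIcc (by simpa using ht))
      (hf.contDiffAt.of_le (by exact_mod_cast (mem_range.mp hk).le)) Set.left_mem_uIcc
  rw [taylor_within_apply, sum_congr rfl fun k hk => by rw [hcoeff k hk]] at hy
  simp only [add_sub_cancel_left, smul_eq_mul] at hy
  have hsum : ∑ k ∈ range (n + 1), iteratedDeriv k f x * t ^ k / k !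
      = ∑ k ∈ range (n + 1), (k ! : ℝ)⁻¹ * t ^ k * iteratedDeriv k f x :=
    sum_congr rfl fun k _ => by ring
  rw [hsum, hy, abs_div, abs_mul, abs_pow, Nat.abs_cast]
  gcongr
  exact hM y

theorem inv_mul_sum_range_eq_add_inv_mul_sum_sub {N : ℕ} (hN : N ≠ 0) (a : ℕ → ℝ) (c : ℝ) :
    (N : ℝ)⁻¹ * ∑ i ∈ range N, a i = c + (N : ℝ)⁻¹ * ∑ i ∈ range N, (a i - c) := by
  rw [sum_sub_distrib, sum_const, card_range, nsmul_eq_mul]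
  field_simp
  ring

section

variable {Ω : Type*} [MeasurableSpace Ω] {μ : Measure Ω}

theorem MeasureTheory.MemLp.integrable_pow_of_le [IsFiniteMeasure μ] {f : Ω → ℝ} {n k : ℕ}
    (hf : MemLp f n μ) (hk : k ≤ n) : Integrable (fun ω => f ω ^ k) μ :=
  (hf.mono_exponent (by exact_mod_cast hk)).integrable_norm_pow'.mono'
    (hf.aestronglyMeasurable.pow k) (ae_of_all _ fun ω => by simp [norm_pow])

theorem MeasureTheory.memLp_of_integrable_pow {f : Ω → ℝ} {n : ℕ} (hn : Even n) (hn₀ : n ≠ 0)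
    (hf : AEStronglyMeasurable f μ) (hfn : Integrable (fun ω => f ω ^ n) μ) : MemLp f n μ :=
  (integrable_norm_rpow_iff hf (by exact_mod_cast hn₀) (by simp)).mp
    (by simpa [Real.norm_eq_abs, hn.pow_abs] using hfn)

theorem abs_integral_sub_taylor_le [IsProbabilityMeasure μ] {f : ℝ → ℝ} {n : ℕ}
    (hf : ContDiff ℝ (n + 1) f) {M : ℝ} (hM : ∀ y, |iteratedDeriv (n + 1) f y| ≤ M) (x : ℝ)
    {T : Ω → ℝ} (hT : MemLp T (n + 1) μ) :
    |∫ ω, f (x + T ω) ∂μ - ∑ k ∈ range (n + 1), iteratedDeriv k f x * (∫ ω, T ω ^ k ∂μ) / k !|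
      ≤ M * (∫ ω, |T ω| ^ (n + 1) ∂μ) / (n + 1)! := by
  set P : Ω → ℝ := fun ω => ∑ k ∈ range (n + 1), iteratedDeriv k f x * T ω ^ k / (k ! : ℝ)
  have hT' : MemLp T (n + 1 : ℕ) μ := by exact_mod_cast hT
  have hPk : ∀ k ∈ range (n + 1),
      Integrable (fun ω => iteratedDeriv k f x * T ω ^ k / k !) μ := fun k hk =>
    ((hT'.integrable_pow_of_le (mem_range.mp hk).le).const_mul _).div_const _
  have hP : Integrable P μ := integrable_finsetSum _ hPk
  have hbound : Integrable (fun ω => M * |T ω| ^ (n + 1) / (n + 1)!) μ :=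
    ((hT'.integrable_norm_pow').const_mul M).div_const _
  have hR : Integrable (fun ω => f (x + T ω) - P ω) μ :=
    hbound.mono' ((hf.continuous.comp_aestronglyMeasurable
      (aestronglyMeasurable_const.add hT.1)).sub hP.1)
      (ae_of_all _ fun ω => abs_sub_taylor_le hf hM x (T ω))
  have hfT : Integrable (fun ω => f (x + T ω)) μ :=
    (hR.add hP).congr (ae_of_all _ fun ω => sub_add_cancel _ _)
  calc |∫ ω, f (x + T ω) ∂μ - ∑ k ∈ range (n + 1), iteratedDeriv k f x * (∫ ω, T ω ^ k ∂μ) / k !|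
      = ‖∫ ω, (f (x + T ω) - P ω) ∂μ‖ := by
        rw [integral_sub hfT hP, integral_finsetSum _ hPk, Real.norm_eq_abs]
        simp only [integral_div, integral_const_mul]
    _ ≤ ∫ ω, M * |T ω| ^ (n + 1) / (n + 1)! ∂μ :=
        norm_integral_le_of_norm_le hbound
          (ae_of_all _ fun ω => abs_sub_taylor_le hf hM x (T ω))
    _ = M * (∫ ω, |T ω| ^ (n + 1) ∂μ) / (n + 1)! := by rw [integral_div, integral_const_mul]

namespace ProbabilityTheory

theorem IdentDistrib.integral_pow_eq {Ω' : Type*} [MeasurableSpace Ω'] {ν : Measure Ω'}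
    {X : Ω → ℝ} {X' : Ω' → ℝ} (h : IdentDistrib X X' μ ν) (k : ℕ) :
    ∫ ω, X ω ^ k ∂μ = ∫ ω, X' ω ^ k ∂ν :=
  (h.comp (measurable_id.pow_const k)).integral_eq

theorem IndepFun.integral_add_pow [IsFiniteMeasure μ] {S Z : Ω → ℝ}
    (hSZ : IndepFun S Z μ) {n : ℕ} (hS : MemLp S n μ) (hZ : MemLp Z n μ) :
    ∫ ω, (S ω + Z ω) ^ n ∂μ
      = ∑ k ∈ range (n + 1), (∫ ω, S ω ^ k ∂μ) * (∫ ω, Z ω ^ (n - k) ∂μ) * n.choose k := by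
  have hpow : ∀ k ∈ range (n + 1), IndepFun (fun ω => S ω ^ k) (fun ω => Z ω ^ (n - k)) μ :=
    fun k _ => hSZ.comp (measurable_id.pow_const k) (measurable_id.pow_const (n - k))
  have hterm : ∀ k ∈ range (n + 1),
      Integrable (fun ω => S ω ^ k * Z ω ^ (n - k) * n.choose k) μ := fun k hk =>
    ((hpow k hk).integrable_mul (hS.integrable_pow_of_le (mem_range_succ_iff.mp hk))
      (hZ.integrable_pow_of_le (n.sub_le k))).mul_const _
  simp_rw [add_pow]
  rw [integral_finsetSum _ hterm]
  refine sum_congr rfl fun k hk => ?_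
  rw [integral_mul_const]
  exact congrArg (· * _) ((hpow k hk).integral_mul_eq_mul_integral
    (hS.aestronglyMeasurable.pow k) (hZ.aestronglyMeasurable.pow _))

variable {Y : ℕ → Ω → ℝ}

theorem integral_sum_range_eq_zero (hident : ∀ i, IdentDistrib (Y i) (Y 0) μ μ)
    (hY : Integrable (Y 0) μ) (hmean : ∫ ω, Y 0 ω ∂μ = 0) (N : ℕ) :
    ∫ ω, ∑ i ∈ range N, Y i ω ∂μ = 0 := by
  rw [integral_finsetSum _ fun i _ => (hident i).integrable_iff.mpr hY]
  exact sum_eq_zero fun i _ => (hident i).integral_eq.trans hmean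

theorem iIndepFun.integral_sum_range_succ_pow [IsProbabilityMeasure μ]
    (hmeas : ∀ i, Measurable (Y i)) (hindep : iIndepFun Y μ)
    (hident : ∀ i, IdentDistrib (Y i) (Y 0) μ μ) {n : ℕ} (hY : MemLp (Y 0) n μ) (N : ℕ) :
    ∫ ω, (∑ i ∈ range (N + 1), Y i ω) ^ n ∂μ
      = ∑ k ∈ range (n + 1),
          (∫ ω, (∑ i ∈ range N, Y i ω) ^ k ∂μ) * (∫ ω, Y 0 ω ^ (n - k) ∂μ) * n.choose k := by
  have hYi : ∀ i, MemLp (Y i) n μ := fun i => (hident i).symm.memLp_snd hY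
  have hsum : IndepFun (fun ω => ∑ i ∈ range N, Y i ω) (Y N) μ := by
    simpa only [← Finset.sum_apply] using hindep.indepFun_sum_range_succ hmeas N
  simp only [sum_range_succ _ N]
  rw [hsum.integral_add_pow (memLp_finsetSum _ fun i _ => hYi i) (hYi N)]
  refine sum_congr rfl fun k _ => ?_
  rw [(hident N).integral_pow_eq]

theorem iIndepFun.integral_sum_range_sq [IsProbabilityMeasure μ] (hmeas : ∀ i, Measurable (Y i))
    (hindep : iIndepFun Y μ) (hident : ∀ i, IdentDistrib (Y i) (Y 0) μ μ)
    (hY : MemLp (Y 0) 2 μ) (hmean : ∫ ω, Y 0 ω ∂μ = 0) (N : ℕ) :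
    ∫ ω, (∑ i ∈ range N, Y i ω) ^ 2 ∂μ = N * ∫ ω, Y 0 ω ^ 2 ∂μ := by
  induction N with
  | zero => simp
  | succ N ih =>
    rw [hindep.integral_sum_range_succ_pow hmeas hident (by exact_mod_cast hY)]
    simp only [sum_range_succ, sum_range_zero, reduceAdd, reduceSub, Nat.choose, pow_zero, pow_one,
      integral_const, probReal_univ, smul_eq_mul, ih,
      integral_sum_range_eq_zero hident (hY.integrable one_le_two) hmean]
    push_cast
    ring

theorem iIndepFun.integral_sum_range_pow_three [IsProbabilityMeasure μ]
    (hmeas : ∀ i, Measurable (Y i)) (hindep : iIndepFun Y μ)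
    (hident : ∀ i, IdentDistrib (Y i) (Y 0) μ μ) (hY : MemLp (Y 0) 3 μ)
    (hmean : ∫ ω, Y 0 ω ∂μ = 0) (N : ℕ) :
    ∫ ω, (∑ i ∈ range N, Y i ω) ^ 3 ∂μ = N * ∫ ω, Y 0 ω ^ 3 ∂μ := by
  induction N with
  | zero => simp
  | succ N ih =>
    rw [hindep.integral_sum_range_succ_pow hmeas hident (by exact_mod_cast hY)]
    simp only [sum_range_succ, sum_range_zero, reduceAdd, reduceSub, Nat.choose, pow_zero, pow_one,
      integral_const, probReal_univ, smul_eq_mul, ih,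
      integral_sum_range_eq_zero hident (hY.integrable (by norm_num)) hmean, hmean]
    push_cast
    ring

theorem iIndepFun.integral_sum_range_pow_four [IsProbabilityMeasure μ]
    (hmeas : ∀ i, Measurable (Y i)) (hindep : iIndepFun Y μ)
    (hident : ∀ i, IdentDistrib (Y i) (Y 0) μ μ) (hY : MemLp (Y 0) 4 μ)
    (hmean : ∫ ω, Y 0 ω ∂μ = 0) (N : ℕ) :
    ∫ ω, (∑ i ∈ range N, Y i ω) ^ 4 ∂μ
      = N * ∫ ω, Y 0 ω ^ 4 ∂μ + 3 * N * (N - 1) * (∫ ω, Y 0 ω ^ 2 ∂μ) ^ 2 := by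
  induction N with
  | zero => simp
  | succ N ih =>
    rw [hindep.integral_sum_range_succ_pow hmeas hident (by exact_mod_cast hY)]
    simp only [sum_range_succ, sum_range_zero, reduceAdd, reduceSub, Nat.choose, pow_zero, pow_one,
      integral_const, probReal_univ, smul_eq_mul, ih,
      integral_sum_range_eq_zero hident (hY.integrable (by norm_num)) hmean, hmean,
      hindep.integral_sum_range_sq hmeas hident (hY.mono_exponent (by norm_num)) hmean]
    push_cast
    ring

theorem iIndepFun.abs_integral_comp_add_average_sub_taylor_le [IsProbabilityMeasure μ]
    (hmeas : ∀ i, Measurable (Y i)) (hindep : iIndepFun Y μ)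
    (hident : ∀ i, IdentDistrib (Y i) (Y 0) μ μ) (hY : MemLp (Y 0) 4 μ)
    (hmean : ∫ ω, Y 0 ω ∂μ = 0) {h : ℝ → ℝ} (hh : ContDiff ℝ 4 h) {M : ℝ}
    (hM : ∀ y, |iteratedDeriv 4 h y| ≤ M) (x : ℝ) {N : ℕ} (hN : N ≠ 0) :
    |∫ ω, h (x + (N : ℝ)⁻¹ * ∑ i ∈ range N, Y i ω) ∂μ
        - (h x + iteratedDeriv 2 h x * (∫ ω, Y 0 ω ^ 2 ∂μ) / (2 * N)
          + iteratedDeriv 3 h x * (∫ ω, Y 0 ω ^ 3 ∂μ) / (6 * N ^ 2))|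
      ≤ M * ((N * ∫ ω, Y 0 ω ^ 4 ∂μ + 3 * N * (N - 1) * (∫ ω, Y 0 ω ^ 2 ∂μ) ^ 2) / N ^ 4)
        / 24 := by
  set T : Ω → ℝ := fun ω => (N : ℝ)⁻¹ * ∑ i ∈ range N, Y i ω
  have hT : MemLp T (3 + 1) μ := by
    exact_mod_cast (memLp_finsetSum (range N) fun i _ => (hident i).symm.memLp_snd hY).const_mul _
  have hmoment : ∀ k, ∫ ω, T ω ^ k ∂μ = (N : ℝ)⁻¹ ^ k * ∫ ω, (∑ i ∈ range N, Y i ω) ^ k ∂μ :=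
    fun k => by simp only [T, mul_pow, integral_const_mul]
  have hpoly : ∑ k ∈ range (3 + 1), iteratedDeriv k h x * (∫ ω, T ω ^ k ∂μ) / (k ! : ℝ)
      = h x + iteratedDeriv 2 h x * (∫ ω, Y 0 ω ^ 2 ∂μ) / (2 * N)
        + iteratedDeriv 3 h x * (∫ ω, Y 0 ω ^ 3 ∂μ) / (6 * N ^ 2) := by
    simp only [sum_range_succ, sum_range_zero, reduceAdd, hmoment, pow_zero, pow_one,
      integral_const, probReal_univ, smul_eq_mul, iteratedDeriv_zero, factorial, cast_one,
      integral_sum_range_eq_zero hident (hY.integrable (by norm_num)) hmean,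
      hindep.integral_sum_range_sq hmeas hident (hY.mono_exponent (by norm_num)) hmean,
      hindep.integral_sum_range_pow_three hmeas hident (hY.mono_exponent (by norm_num)) hmean]
    field_simp
    ring
  have hrem : ∫ ω, |T ω| ^ (3 + 1) ∂μ
      = (N * ∫ ω, Y 0 ω ^ 4 ∂μ + 3 * N * (N - 1) * (∫ ω, Y 0 ω ^ 2 ∂μ) ^ 2) / N ^ 4 := by
    simp only [reduceAdd, (show Even 4 by decide).pow_abs, hmoment,
      hindep.integral_sum_range_pow_four hmeas hident hY hmean]
    field_simp
  have key := abs_integral_sub_taylor_le (n := 3) (by exact_mod_cast hh) hM x hT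
  rwa [hpoly, hrem, show ((3 + 1)! : ℝ) = 24 by norm_num [Nat.factorial]] at key

theorem iIndepFun.abs_integral_comp_add_average_sub_le [IsProbabilityMeasure μ]
    (hmeas : ∀ i, Measurable (Y i)) (hindep : iIndepFun Y μ)
    (hident : ∀ i, IdentDistrib (Y i) (Y 0) μ μ) (hY : MemLp (Y 0) 4 μ)
    (hmean : ∫ ω, Y 0 ω ∂μ = 0) {h : ℝ → ℝ} (hh : ContDiff ℝ 4 h) {M : ℝ}
    (hM : ∀ y, |iteratedDeriv 4 h y| ≤ M) (x : ℝ) {N : ℕ} (hN : N ≠ 0) :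
    |∫ ω, h (x + (N : ℝ)⁻¹ * ∑ i ∈ range N, Y i ω) ∂μ - h x
        - iteratedDeriv 2 h x * (∫ ω, Y 0 ω ^ 2 ∂μ) / (2 * N)|
      ≤ (|iteratedDeriv 3 h x * ∫ ω, Y 0 ω ^ 3 ∂μ| / 6
          + M * (∫ ω, Y 0 ω ^ 4 ∂μ + 3 * (∫ ω, Y 0 ω ^ 2 ∂μ) ^ 2) / 24) / N ^ 2 := by
  have key := hindep.abs_integral_comp_add_average_sub_taylor_le hmeas hident hY hmean hh hM x hN
  set E := ∫ ω, h (x + (N : ℝ)⁻¹ * ∑ i ∈ range N, Y i ω) ∂μ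
  set m₂ := ∫ ω, Y 0 ω ^ 2 ∂μ
  set m₃ := ∫ ω, Y 0 ω ^ 3 ∂μ
  set m₄ := ∫ ω, Y 0 ω ^ 4 ∂μ
  have hNpos : (0 : ℝ) < N := by positivity
  have hN1 : (1 : ℝ) ≤ N := by exact_mod_cast Nat.one_le_iff_ne_zero.mpr hN
  have hM0 : 0 ≤ M := (abs_nonneg _).trans (hM x)
  have hm₄ : 0 ≤ m₄ := integral_nonneg fun ω => by positivity
  have hfourth : (N * m₄ + 3 * N * (N - 1) * m₂ ^ 2) / N ^ 4 ≤ (m₄ + 3 * m₂ ^ 2) / N ^ 2 := by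
    have : N * m₄ + 3 * N * (N - 1) * m₂ ^ 2 ≤ N ^ 2 * (m₄ + 3 * m₂ ^ 2) := by
      nlinarith [mul_nonneg (mul_nonneg hm₄ (sub_nonneg.mpr hN1)) hNpos.le,
        mul_nonneg hNpos.le (sq_nonneg m₂)]
    calc _ ≤ N ^ 2 * (m₄ + 3 * m₂ ^ 2) / N ^ 4 := by gcongr
      _ = _ := by field_simp
  calc |E - h x - iteratedDeriv 2 h x * m₂ / (2 * N)|
      = |(E - (h x + iteratedDeriv 2 h x * m₂ / (2 * N) + iteratedDeriv 3 h x * m₃ / (6 * N ^ 2)))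
          + iteratedDeriv 3 h x * m₃ / (6 * N ^ 2)| := by ring_nf
    _ ≤ M * ((N * m₄ + 3 * N * (N - 1) * m₂ ^ 2) / N ^ 4) / 24
          + |iteratedDeriv 3 h x * m₃| / (6 * N ^ 2) := by
        refine (abs_add_le _ _).trans (add_le_add key (le_of_eq ?_))
        rw [abs_div, abs_of_pos (by positivity : (0 : ℝ) < 6 * N ^ 2)]
    _ ≤ M * ((m₄ + 3 * m₂ ^ 2) / N ^ 2) / 24 + |iteratedDeriv 3 h x * m₃| / (6 * N ^ 2) := by
        gcongr
    _ = _ := by ring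

end ProbabilityTheory

end

/-- Delta method of moments: for i.i.d. real random variables with finite fourth moment
and `h` four times continuously differentiable with uniformly bounded derivatives,
`E[h(X̄_N)] = h(μ) + h''(μ)σ²/(2N) + O(1/N²)`. -/
theorem delta_method_of_moments
    {Ω : Type*} [MeasureSpace Ω] [IsProbabilityMeasure (ℙ : Measure Ω)]
    (X : ℕ → Ω → ℝ)
    (hmeas : ∀ i, Measurable (X i))
    (hindep : iIndepFun X ℙ)
    (hident : ∀ i, IdentDistrib (X i) (X 0) ℙ ℙ)
    (hmom4 : Integrable (fun ω => (X 0 ω)^4))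
    (μ : ℝ) (hμ : μ = ∫ ω, X 0 ω)
    (σ2 : ℝ) (hσ2 : σ2 = variance (X 0) ℙ)
    (h : ℝ → ℝ) (hsmooth : ContDiff ℝ 4 h)
    (hbdd : ∀ k : ℕ, 1 ≤ k → k ≤ 4 → ∃ M : ℝ, ∀ x : ℝ, |iteratedDeriv k h x| ≤ M) :
    ∃ C : ℝ, 0 < C ∧ ∀ N : ℕ, 1 ≤ N →
      |(∫ ω, h ((N : ℝ)⁻¹ * ∑ i ∈ Finset.range N, X i ω))
          - h μ - iteratedDeriv 2 h μ * σ2 / (2 * N)|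
        ≤ C / (N : ℝ)^2 := by
  obtain ⟨M, hM⟩ := hbdd 4 (by norm_num) le_rfl
  set Y : ℕ → Ω → ℝ := fun i ω => X i ω - μ
  have hX : MemLp (X 0) 4 ℙ :=
    memLp_of_integrable_pow (by decide) (by norm_num) (hmeas 0).aestronglyMeasurable hmom4
  have hY : MemLp (Y 0) 4 ℙ := hX.sub (memLp_const μ)
  have hmean : ∫ ω, Y 0 ω = 0 := by
    simp [Y, integral_sub (hX.integrable (by norm_num)), ← hμ]
  have hvar : σ2 = ∫ ω, Y 0 ω ^ 2 := by
    rw [hσ2, variance_eq_integral (hmeas 0).aemeasurable, ← hμ]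
  set C : ℝ := |iteratedDeriv 3 h μ * ∫ ω, Y 0 ω ^ 3| / 6
    + M * ((∫ ω, Y 0 ω ^ 4) + 3 * (∫ ω, Y 0 ω ^ 2) ^ 2) / 24
  refine ⟨max C 1, lt_max_of_lt_right one_pos, fun N hN => ?_⟩
  simp only [inv_mul_sum_range_eq_add_inv_mul_sum_sub (by omega : N ≠ 0) (X · _) μ, hvar]
  refine (iIndepFun.abs_integral_comp_add_average_sub_le (fun i => (hmeas i).sub_const μ)
    (hindep.comp _ fun _ => measurable_id.sub_const μ)
    (fun i => (hident i).comp (measurable_id.sub_const μ)) hY hmean hsmooth hM μ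
    (by omega)).trans ?_
  gcongr
  exact le_max_left C 1
end
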